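/- Corollary 2.3 (deterministic/probabilistic form): if η_i > 0 are i.i.d. random variables (with finite or infinite mean) and S̃ is the penalised walk driven by i.i.d. mean-zero finite-variance ξ_i, then sup_{0≤t≤1} T(nt)/n → 0 in probability as n → ∞. In particular T(n)/n → 0 in probability. -/

import Mathlib

open Filter MeasureTheory ProbabilityTheory

noncomputable section

/-- Partial sum `a 0 + ⋯ + a (k-1)` (so `a i` plays the role of the `(i+1)`-st increment). -/
def pSum (a : ℕ → ℝ) (k : ℕ) : ℝ := ∑ i ∈ Finset.range k, a i

/-- The counter `T(n) = #{k < n : S̃(k) ≤ 0}` of the penalised walk, defined recursively. -/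
def Tcnt (ξ η : ℕ → ℝ) : ℕ → ℕ
  | 0 => 0
  | n + 1 =>
      Tcnt ξ η n + (if pSum ξ (n - Tcnt ξ η n) + pSum η (Tcnt ξ η n) ≤ 0 then 1 else 0)

/-- The penalised walk `S̃(n) = S_ξ(n − T(n)) + S_η(T(n))`. -/
def Stil (ξ η : ℕ → ℝ) (n : ℕ) : ℝ :=
  pSum ξ (n - Tcnt ξ η n) + pSum η (Tcnt ξ η n)

/-- Running minimum `min_{0 ≤ j ≤ k} S_ξ(j)`. -/
def runMin (ξ : ℕ → ℝ) (k : ℕ) : ℝ :=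
  (Finset.range (k + 1)).inf' (Finset.nonempty_range_iff.mpr (Nat.succ_ne_zero k)) (pSum ξ)

/-- `max_{1 ≤ i ≤ m} |a_i|` (equal to `0` if `m = 0`). -/
def maxAbs (a : ℕ → ℝ) (m : ℕ) : ℝ := ⨆ i ∈ Finset.range m, |a i|

/-- First passage time `N_η(x) = inf{k ≥ 1 : S_η(k) > x}`. -/
def Nhit (η : ℕ → ℝ) (x : ℝ) : ℕ := sInf {k : ℕ | x < pSum η k}

end

open Topology

lemma Tcnt_mono (ξ η : ℕ → ℝ) : Monotone (Tcnt ξ η) := by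
  apply monotone_nat_of_le_succ
  intro n
  show Tcnt ξ η n ≤ Tcnt ξ η n + _
  exact Nat.le_add_right _ _

lemma runMin_le (ξ : ℕ → ℝ) {j n : ℕ} (h : j ≤ n) : runMin ξ n ≤ pSum ξ j :=
  Finset.inf'_le _ (Finset.mem_range.mpr (by omega))

lemma runMin_anti (ξ : ℕ → ℝ) : Antitone (runMin ξ) := by
  apply antitone_nat_of_succ_le
  intro n
  apply Finset.le_inf'
  intro j hj
  exact runMin_le ξ (by have := Finset.mem_range.mp hj; omega)

lemma Tcnt_key (ξ η : ℕ → ℝ) (n : ℕ) :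
    Tcnt ξ η n = 0 ∨ pSum η (Tcnt ξ η n - 1) ≤ - runMin ξ n := by
  induction n with
  | zero => left; rfl
  | succ n ih =>
    by_cases hc : pSum ξ (n - Tcnt ξ η n) + pSum η (Tcnt ξ η n) ≤ 0
    · right
      have hT : Tcnt ξ η (n+1) = Tcnt ξ η n + 1 := by simp [Tcnt, hc]
      rw [hT]
      simp only [Nat.add_sub_cancel]
      have h1 : runMin ξ (n+1) ≤ pSum ξ (n - Tcnt ξ η n) := runMin_le ξ (by omega)
      linarith
    · have hT : Tcnt ξ η (n+1) = Tcnt ξ η n := by simp [Tcnt, hc]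
      rw [hT]
      rcases ih with h | h
      · left; exact h
      · right; exact h.trans (by linarith [runMin_anti ξ (Nat.le_succ n)])

/-- Deterministic convergence: if `S_ξ(n)/n → 0` and `S_η(m)` grows at least linearly,
then `T(n)/n → 0`. -/
lemma det_tendsto (a b : ℕ → ℝ)
    (ha : Tendsto (fun n : ℕ => pSum a n / n) atTop (𝓝 0))
    (c : ℝ) (hc : 0 < c) (hb : ∀ᶠ m : ℕ in atTop, c * m ≤ pSum b m) :
    Tendsto (fun n : ℕ => (Tcnt a b n : ℝ) / n) atTop (𝓝 0) := by
  have hmin : ∀ δ : ℝ, 0 < δ → ∀ᶠ n : ℕ in atTop, - runMin a n ≤ δ * n := by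
    intro δ hδ
    have h1 : ∀ᶠ k : ℕ in atTop, -δ < pSum a k / k :=
      ha.eventually (eventually_gt_nhds (by linarith))
    rw [eventually_atTop] at h1
    obtain ⟨K, hK⟩ := h1
    have hK' : ∀ k : ℕ, K ≤ k → 1 ≤ k → -(δ * k) ≤ pSum a k := by
      intro k hk hk1
      have hkpos : (0:ℝ) < k := by exact_mod_cast hk1
      have := hK k hk
      rw [lt_div_iff₀ hkpos] at this
      linarith
    set C : ℝ := ∑ j ∈ Finset.range (K + 1), |pSum a j| with hC
    have hCb : ∀ j : ℕ, j ≤ K → -C ≤ pSum a j := by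
      intro j hj
      have h2 : |pSum a j| ≤ C :=
        Finset.single_le_sum (fun i _ => abs_nonneg (pSum a i))
          (Finset.mem_range.mpr (by omega))
      have := neg_abs_le (pSum a j)
      linarith
    filter_upwards [eventually_ge_atTop (K + 1), eventually_ge_atTop ⌈C / δ⌉₊] with n hn1 hn2
    have hCn : C ≤ δ * n := by
      have : (⌈C / δ⌉₊ : ℝ) ≤ n := by exact_mod_cast hn2
      have h3 : C / δ ≤ n := le_trans (Nat.le_ceil _) this
      rw [div_le_iff₀ hδ] at h3
      linarith
    have : -(δ * n) ≤ runMin a n := by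
      apply Finset.le_inf'
      intro j hj
      have hjn : j ≤ n := by simpa using Nat.lt_succ_iff.mp (Finset.mem_range.mp hj)
      by_cases hjK : j ≤ K
      · linarith [hCb j hjK]
      · have hjn' : (j : ℝ) ≤ n := by exact_mod_cast hjn
        have := hK' j (by omega) (by omega)
        nlinarith [hδ.le]
    linarith
  rw [NormedAddCommGroup.tendsto_nhds_zero]
  intro ε hε
  rw [eventually_atTop] at hb
  obtain ⟨M0, hM0⟩ := hb
  have hδ : (0:ℝ) < c * ε / 4 := by positivity
  filter_upwards [hmin _ hδ, eventually_ge_atTop (⌈(2:ℝ)/ε⌉₊ + 1),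
    eventually_ge_atTop (⌈(M0 + 1 : ℝ)/ε⌉₊ + 1)] with n h1 h2 h3
  have hn1 : 1 ≤ n := by omega
  have hnpos : (0:ℝ) < n := by exact_mod_cast hn1
  have hεn2 : (2:ℝ) ≤ ε * n := by
    have : ((⌈(2:ℝ)/ε⌉₊ : ℝ)) ≤ n := by exact_mod_cast (by omega : ⌈(2:ℝ)/ε⌉₊ ≤ n)
    have h4 : (2:ℝ)/ε ≤ n := le_trans (Nat.le_ceil _) this
    rw [div_le_iff₀ hε] at h4
    linarith
  have hεnM : (M0 + 1 : ℝ) ≤ ε * n := by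
    have : ((⌈(M0 + 1 : ℝ)/ε⌉₊ : ℝ)) ≤ n := by
      exact_mod_cast (by omega : ⌈(M0 + 1 : ℝ)/ε⌉₊ ≤ n)
    have h4 : (M0 + 1 : ℝ)/ε ≤ n := le_trans (Nat.le_ceil _) this
    rw [div_le_iff₀ hε] at h4
    linarith
  rw [Real.norm_eq_abs, abs_of_nonneg (by positivity)]
  by_contra hcon
  push_neg at hcon
  have hTn : ε * n ≤ (Tcnt a b n : ℝ) := by
    rw [le_div_iff₀ hnpos] at hcon
    linarith
  have hT1 : 1 ≤ Tcnt a b n := by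
    rcases Nat.eq_zero_or_pos (Tcnt a b n) with h' | h'
    · rw [h'] at hTn; push_cast at hTn; linarith
    · exact h'
  rcases Tcnt_key a b n with h | h
  · omega
  · have hcast : ((Tcnt a b n - 1 : ℕ) : ℝ) = (Tcnt a b n : ℝ) - 1 := by
      rw [Nat.cast_sub hT1]; norm_num
    have hMle : M0 ≤ Tcnt a b n - 1 := by
      have : (M0 : ℝ) ≤ (Tcnt a b n : ℝ) - 1 := by linarith
      rw [← hcast] at this
      exact_mod_cast this
    have h5 := hM0 _ hMle
    have h6 : pSum b (Tcnt a b n - 1) ≤ c * ε / 4 * n := le_trans h h1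
    have h7 : c * ((Tcnt a b n : ℝ) - 1) ≤ c * ε / 4 * n := by
      rw [← hcast]; exact le_trans h5 h6
    have h8 : (Tcnt a b n : ℝ) - 1 ≤ ε / 4 * n := by
      have := (mul_le_mul_iff_right₀ hc).mp (by linarith : c * ((Tcnt a b n : ℝ) - 1) ≤ c * (ε / 4 * n))
      linarith
    linarith


lemma biSup_floor (f : ℕ → ℕ) (hf : Monotone f) (n : ℕ) :
    (⨆ t ∈ Set.Icc (0:ℝ) 1, ((f ⌊(n:ℝ)*t⌋₊ : ℝ)/n)) = (f n : ℝ)/n := by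
  set g : ℝ → ℝ := fun t => ((f ⌊(n:ℝ)*t⌋₊ : ℝ)/n) with hgdef
  have hg1 : g 1 = (f n : ℝ)/n := by simp [hgdef]
  have key : ∀ t : ℝ, (⨆ _ : t ∈ Set.Icc (0:ℝ) 1, g t) ≤ g 1 := by
    intro t
    by_cases h : t ∈ Set.Icc (0:ℝ) 1
    · rw [ciSup_pos h]
      have hmul : (n:ℝ) * t ≤ (n:ℝ) * 1 :=
        mul_le_mul_of_nonneg_left h.2 (Nat.cast_nonneg n)
      have hfl : (f ⌊(n:ℝ)*t⌋₊ : ℝ) ≤ (f ⌊(n:ℝ)*1⌋₊ : ℝ) :=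
        Nat.cast_le.mpr (hf (Nat.floor_le_floor hmul))
      rcases eq_or_lt_of_le (Nat.cast_nonneg (α := ℝ) n) with h0 | h0
      · simp [hgdef, ← h0]
      · exact (div_le_div_iff_of_pos_right h0).mpr hfl
    · haveI : IsEmpty (t ∈ Set.Icc (0:ℝ) 1 : Prop) := by
        rw [isEmpty_Prop]; exact h
      rw [Real.iSup_of_isEmpty]
      rw [hg1]; positivity
  refine le_antisymm ((ciSup_le key).trans hg1.le) ?_
  rw [← hg1]
  have hB : BddAbove (Set.range fun t : ℝ => ⨆ _ : t ∈ Set.Icc (0:ℝ) 1, g t) := by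
    refine ⟨g 1, ?_⟩
    rintro x ⟨t, rfl⟩
    exact key t
  refine le_trans ?_ (le_ciSup hB (1:ℝ))
  rw [ciSup_pos (show (1:ℝ) ∈ Set.Icc (0:ℝ) 1 by norm_num)]

lemma measurable_Tcnt {Ω : Type} [MeasurableSpace Ω] (ξ η : ℕ → Ω → ℝ)
    (hmξ : ∀ i, Measurable (ξ i)) (hmη : ∀ i, Measurable (η i)) (n : ℕ) :
    Measurable (fun ω => Tcnt (fun i => ξ i ω) (fun i => η i ω) n) := by
  induction n with
  | zero => exact measurable_const
  | succ n ih =>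
    have hpξ : Measurable (fun p : Ω × ℕ => pSum (fun i => ξ i p.1) p.2) :=
      measurable_from_prod_countable_left (fun k => by
        simpa [pSum] using Finset.measurable_sum (Finset.range k) (fun i _ => hmξ i))
    have hpη : Measurable (fun p : Ω × ℕ => pSum (fun i => η i p.1) p.2) :=
      measurable_from_prod_countable_left (fun k => by
        simpa [pSum] using Finset.measurable_sum (Finset.range k) (fun i _ => hmη i))
    have hA : Measurable (fun ω =>
        pSum (fun i => ξ i ω) (n - Tcnt (fun i => ξ i ω) (fun i => η i ω) n)) :=
      hpξ.comp (measurable_id.prodMk (measurable_const.sub ih))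
    have hB : Measurable (fun ω =>
        pSum (fun i => η i ω) (Tcnt (fun i => ξ i ω) (fun i => η i ω) n)) :=
      hpη.comp (measurable_id.prodMk ih)
    show Measurable fun ω => Tcnt _ _ n + _
    refine ih.add (Measurable.ite ?_ measurable_const measurable_const)
    exact measurableSet_le (hA.add hB) measurable_const

/-- Corollary 2.3: for the penalised walk driven by i.i.d. mean-zero,
finite-variance `ξ` and positive i.i.d. `η` (independent of the `ξ`'s),
`sup_{0≤t≤1} T(nt)/n → 0` in probability; in particular `T(n)/n → 0` in probability. -/
theorem stmt7
    {Ω : Type} [MeasurableSpace Ω] (P : MeasureTheory.Measure Ω)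
    [MeasureTheory.IsProbabilityMeasure P]
    (ξ η : ℕ → Ω → ℝ)
    (hmξ : ∀ i, Measurable (ξ i)) (hmη : ∀ i, Measurable (η i))
    (hindep : ProbabilityTheory.iIndepFun (Sum.elim ξ η) P)
    (hidξ : ∀ i, ProbabilityTheory.IdentDistrib (ξ i) (ξ 0) P P)
    (hidη : ∀ i, ProbabilityTheory.IdentDistrib (η i) (η 0) P P)
    (hmean : ∫ ω, ξ 0 ω ∂P = 0)
    (hL2 : MeasureTheory.MemLp (ξ 0) 2 P)
    (hpos : ∀ i ω, 0 < η i ω) :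
    (∀ ε : ℝ, 0 < ε →
      Filter.Tendsto
        (fun n : ℕ => P {ω | ε ≤ ⨆ t ∈ Set.Icc (0 : ℝ) 1,
          (Tcnt (fun i => ξ i ω) (fun i => η i ω) ⌊(n : ℝ) * t⌋₊ : ℝ) / n})
        Filter.atTop (nhds 0)) ∧
    (∀ ε : ℝ, 0 < ε →
      Filter.Tendsto
        (fun n : ℕ => P {ω | ε ≤ (Tcnt (fun i => ξ i ω) (fun i => η i ω) n : ℝ) / n})
        Filter.atTop (nhds 0)) := by
  have hmT : ∀ n, Measurable (fun ω => Tcnt (fun i => ξ i ω) (fun i => η i ω) n) :=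
    measurable_Tcnt ξ η hmξ hmη
  -- SLLN for ξ
  have hPairξ : Pairwise (Function.onFun (IndepFun · · P) ξ) := by
    intro i j hij
    have := hindep.indepFun (show (Sum.inl i : ℕ ⊕ ℕ) ≠ Sum.inl j by simpa using hij)
    simpa using this
  have hξae := strong_law_ae (μ := P) ξ (hL2.integrable one_le_two) hPairξ hidξ
  rw [hmean] at hξae
  -- SLLN for min (η, 1)
  set b : ℕ → Ω → ℝ := fun i ω => min (η i ω) 1 with hbdef
  have hminmeas : Measurable (fun x : ℝ => min x 1) := measurable_id.min measurable_const
  have hmb : ∀ i, Measurable (b i) := fun i => (hmη i).min measurable_const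
  have hPairb : Pairwise (Function.onFun (IndepFun · · P) b) := by
    intro i j hij
    have h0 := hindep.indepFun (show (Sum.inr i : ℕ ⊕ ℕ) ≠ Sum.inr j by simpa using hij)
    have := h0.comp hminmeas hminmeas
    exact this
  have hIdb : ∀ i, IdentDistrib (b i) (b 0) P P := fun i => by
    have := (hidη i).comp hminmeas
    exact this
  have hint : Integrable (b 0) P := by
    refine (integrable_const (1:ℝ)).mono' (hmb 0).aestronglyMeasurable ?_
    filter_upwards with ω
    rw [Real.norm_eq_abs, abs_of_pos (lt_min (hpos 0 ω) one_pos)]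
    exact min_le_right _ _
  set c : ℝ := ∫ ω, b 0 ω ∂P with hcdef
  have hc : 0 < c := by
    rw [hcdef, integral_pos_iff_support_of_nonneg_ae
      (Filter.Eventually.of_forall fun ω => (lt_min (hpos 0 ω) one_pos).le) hint]
    have hsupp : Function.support (b 0) = Set.univ :=
      Set.eq_univ_of_forall fun ω => (lt_min (hpos 0 ω) one_pos).ne'
    rw [hsupp]; simp
  have hbae := strong_law_ae (μ := P) b hint hPairb hIdb
  -- a.s. convergence of T(n)/n
  have hae : ∀ᵐ ω ∂P, Tendsto
      (fun n : ℕ => (Tcnt (fun i => ξ i ω) (fun i => η i ω) n : ℝ)/n) atTop (𝓝 0) := by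
    filter_upwards [hξae, hbae] with ω h1 h2
    refine det_tendsto _ _ ?_ (c/2) (by positivity) ?_
    · have he : (fun n : ℕ => pSum (fun i => ξ i ω) n / n)
          = fun n : ℕ => (n:ℝ)⁻¹ • ∑ i ∈ Finset.range n, ξ i ω := by
        funext n; simp [pSum, smul_eq_mul, div_eq_inv_mul]
      rw [he]; exact h1
    · have h3 : ∀ᶠ m : ℕ in atTop, c/2 < (m:ℝ)⁻¹ • ∑ i ∈ Finset.range m, b i ω :=
        h2.eventually (eventually_gt_nhds (by linarith))
      filter_upwards [h3, eventually_ge_atTop 1] with m hm hm1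
      have hmpos : (0:ℝ) < m := by exact_mod_cast hm1
      rw [smul_eq_mul, inv_mul_eq_div, lt_div_iff₀ hmpos] at hm
      have h4 : c/2 * m ≤ ∑ i ∈ Finset.range m, b i ω := hm.le
      refine h4.trans ?_
      exact Finset.sum_le_sum fun i _ => min_le_left _ _
  -- convergence in probability
  have key2 : ∀ ε : ℝ, 0 < ε → Tendsto
      (fun n : ℕ => P {ω | ε ≤ (Tcnt (fun i => ξ i ω) (fun i => η i ω) n : ℝ) / n})
      atTop (𝓝 0) := by
    have htim : TendstoInMeasure P
        (fun n ω => (Tcnt (fun i => ξ i ω) (fun i => η i ω) n : ℝ)/n) atTop (fun _ => 0) := by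
      refine tendstoInMeasure_of_tendsto_ae
        (fun n => ((measurable_from_top.comp (hmT n)).div_const _).aestronglyMeasurable) ?_
      exact hae
    intro ε hε
    refine (tendstoInMeasure_iff_dist.mp htim ε hε).congr fun n => ?_
    congr 1
    ext ω
    simp only [Set.mem_setOf_eq]
    rw [Real.dist_eq, sub_zero, abs_of_nonneg (by positivity)]
  refine ⟨?_, key2⟩
  intro ε hε
  refine (key2 ε hε).congr fun n => ?_
  congr 1
  ext ω
  simp only [Set.mem_setOf_eq]
  rw [biSup_floor _ (Tcnt_mono _ _) n]
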